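/- Let E and G be Banach function spaces, S : E → G a bounded linear operator dominated by a positive operator R ∈ L(E,G), and X a Banach space. Then the tensor extension S ⊗ I_X : E ⊗ X → G ⊗ X (determined by (S ⊗ I_X)(f ⊗ x) = Sf ⊗ x) extends uniquely to a bounded linear operator S_X from the closure of E ⊗ X in the Köthe–Bochner space E(X) to the closure of G ⊗ X in G(X), with ‖S_X‖ ≤ ‖R‖. -/

import Mathlib

/-!
For a tensor `t = ∑ uⱼ ⊗ xⱼ` and a norming functional `x*` on `X`, the scalar function
`x* ∘ t` is the embedding of `w = ∑ x*(xⱼ) uⱼ ∈ E`, and `|w| ≤ ‖t(·)‖`. Domination gives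
`|S w| ≤ R |w|`, and testing `(S ⊗ I_X) t` against a countable norming family yields the
pointwise estimate `‖(S ⊗ I_X) t‖ ≤ R ‖t(·)‖`. So `S ⊗ I_X` maps a fast Cauchy sequence of
tensors to a sequence whose consecutive differences are dominated by a summable series in `G`;
it converges a.e., and its limit defines the extension. Linearity, the bound `‖R‖` and
uniqueness pass to the limit through the same estimate, with the ideal property of `G`
turning a.e. bounds into norm bounds.
-/

open MeasureTheory

/-- A (model of a) Banach function space on a measure space: a Banach lattice `E`
together with an injective lattice-respecting linear embedding `ι` into `L⁰(μ)`
whose range is an order ideal. -/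
structure IsBanachFunctionSpace {α : Type*} [MeasurableSpace α] (μ : Measure α)
    (E : Type*) [NormedAddCommGroup E] [Lattice E] [HasSolidNorm E] [IsOrderedAddMonoid E] [NormedSpace ℝ E] [CompleteSpace E]
    (ι : E →ₗ[ℝ] (α →ₘ[μ] ℝ)) : Prop where
  inj : Function.Injective ι
  map_abs : ∀ e : E, ⇑(ι |e|) =ᵐ[μ] fun a => |(ι e) a|
  ideal : ∀ (f : α →ₘ[μ] ℝ) (e : E), (∀ᵐ a ∂μ, |f a| ≤ |(ι e) a|) → ∃ e' : E, ι e' = f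

section KB

variable {α E : Type*} [MeasurableSpace α] {μ : Measure α}
  [NormedAddCommGroup E] [Lattice E] [HasSolidNorm E] [IsOrderedAddMonoid E] [NormedSpace ℝ E]
  {X : Type*} [NormedAddCommGroup X] [NormedSpace ℝ X]

/-- `f` is a member of the Köthe–Bochner space `E(X)`, with `e ∈ E` representing its
pointwise norm function `a ↦ ‖f a‖`. -/
def MemKB (ι : E →ₗ[ℝ] (α →ₘ[μ] ℝ)) (f : α → X) (e : E) : Prop :=
  AEStronglyMeasurable f μ ∧ (fun a => ‖f a‖) =ᵐ[μ] ⇑(ι e)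

/-- `f` belongs to the closure of `E ⊗ X` in the Köthe–Bochner space `E(X)`:
it can be approximated in the `E(X)`-norm by finite sums of elementary tensors. -/
def InTensorClosure (ι : E →ₗ[ℝ] (α →ₘ[μ] ℝ)) (f : α → X) : Prop :=
  AEStronglyMeasurable f μ ∧
  ∀ ε > (0 : ℝ), ∃ (n : ℕ) (u : Fin n → E) (x : Fin n → X) (e : E),
    ((fun a => ‖f a - ∑ j : Fin n, (ι (u j)) a • x j‖) =ᵐ[μ] ⇑(ι e)) ∧ ‖e‖ < ε

end KB

section Ext

variable {α β E G : Type*} [MeasurableSpace α] [MeasurableSpace β]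
  {μ : Measure α} {ν : Measure β}
  [NormedAddCommGroup E] [Lattice E] [HasSolidNorm E] [IsOrderedAddMonoid E] [NormedSpace ℝ E]
  [NormedAddCommGroup G] [Lattice G] [HasSolidNorm G] [IsOrderedAddMonoid G] [NormedSpace ℝ G]
  {X : Type*} [NormedAddCommGroup X] [NormedSpace ℝ X]

/-- `SX` is a (function-level realization of a) bounded linear operator, of norm at
most `C`, from the closure of `E ⊗ X` in `E(X)` to the closure of `G ⊗ X` in `G(X)`,
extending the tensor extension `S ⊗ I_X`. -/
def IsTensorClosureExtension (ιE : E →ₗ[ℝ] (α →ₘ[μ] ℝ)) (ιG : G →ₗ[ℝ] (β →ₘ[ν] ℝ))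
    (S : E →L[ℝ] G) (C : ℝ) (SX : (α → X) → (β → X)) : Prop :=
  -- well-defined on a.e.-equivalence classes
  (∀ f g : α → X, InTensorClosure ιE f → InTensorClosure ιE g → f =ᵐ[μ] g →
      SX f =ᵐ[ν] SX g) ∧
  -- maps the closure of `E ⊗ X` into the closure of `G ⊗ X`
  (∀ f : α → X, InTensorClosure ιE f → InTensorClosure ιG (SX f)) ∧
  -- agrees with the tensor extension `S ⊗ I_X` on finite sums of elementary tensors
  (∀ (n : ℕ) (u : Fin n → E) (x : Fin n → X) (f : α → X),
      (f =ᵐ[μ] fun a => ∑ j : Fin n, (ιE (u j)) a • x j) →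
      SX f =ᵐ[ν] fun b => ∑ j : Fin n, (ιG (S (u j))) b • x j) ∧
  -- linearity
  (∀ f g : α → X, InTensorClosure ιE f → InTensorClosure ιE g →
      SX (f + g) =ᵐ[ν] SX f + SX g) ∧
  (∀ (c : ℝ) (f : α → X), InTensorClosure ιE f → SX (c • f) =ᵐ[ν] c • SX f) ∧
  -- boundedness with constant `C`
  (∀ (f : α → X) (e : E) (g : G), InTensorClosure ιE f →
      MemKB ιE f e → MemKB ιG (SX f) g → ‖g‖ ≤ C * ‖e‖)

end Ext

open Filter Topology

section Tensor

variable {α M : Type*} [MeasurableSpace α] {μ : Measure α} [AddCommGroup M] [Module ℝ M]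
  {X : Type*} [NormedAddCommGroup X]

theorem ae_map_add_apply (ι : M →ₗ[ℝ] (α →ₘ[μ] ℝ)) (m₁ m₂ : M) :
    ∀ᵐ a ∂μ, ι (m₁ + m₂) a = ι m₁ a + ι m₂ a := by
  rw [map_add]
  exact AEEqFun.coeFn_add _ _

theorem ae_map_sub_apply (ι : M →ₗ[ℝ] (α →ₘ[μ] ℝ)) (m₁ m₂ : M) :
    ∀ᵐ a ∂μ, ι (m₁ - m₂) a = ι m₁ a - ι m₂ a := by
  rw [map_sub]
  exact AEEqFun.coeFn_sub _ _

theorem ae_map_zero_apply (ι : M →ₗ[ℝ] (α →ₘ[μ] ℝ)) : ∀ᵐ a ∂μ, ι 0 a = 0 := by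
  rw [map_zero]
  exact AEEqFun.coeFn_zero

theorem ae_map_sum_apply (ι : M →ₗ[ℝ] (α →ₘ[μ] ℝ)) {k : Type*} (s : Finset k) (m : k → M) :
    ∀ᵐ a ∂μ, ι (∑ j ∈ s, m j) a = ∑ j ∈ s, ι (m j) a := by
  rw [map_sum]
  exact AEEqFun.coeFn_fun_finsetSum _ _

theorem ae_map_smul_apply (ι : M →ₗ[ℝ] (α →ₘ[μ] ℝ)) (c : ℝ) (m : M) :
    ∀ᵐ a ∂μ, ι (c • m) a = c * ι m a := by
  rw [map_smul]
  exact AEEqFun.coeFn_smul _ _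

theorem ae_map_sum_smul_apply (ι : M →ₗ[ℝ] (α →ₘ[μ] ℝ)) {k : Type*} [Fintype k]
    (c : k → ℝ) (m : k → M) :
    ∀ᵐ a ∂μ, ι (∑ j, c j • m j) a = ∑ j, c j * ι (m j) a := by
  filter_upwards [ae_map_sum_apply ι Finset.univ fun j => c j • m j,
    ae_all_iff.2 fun j => ae_map_smul_apply ι (c j) (m j)] with a hsum hsmul
  rw [hsum]
  exact Finset.sum_congr rfl fun j _ => hsmul j

theorem ae_norm_sub_le_add (ι : M →ₗ[ℝ] (α →ₘ[μ] ℝ)) {F P Q : α → X} {m₁ m₂ : M}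
    (h₁ : ∀ᵐ a ∂μ, ‖F a - P a‖ ≤ ι m₁ a) (h₂ : ∀ᵐ a ∂μ, ‖P a - Q a‖ ≤ ι m₂ a) :
    ∀ᵐ a ∂μ, ‖F a - Q a‖ ≤ ι (m₁ + m₂) a := by
  filter_upwards [h₁, h₂, ae_map_add_apply ι m₁ m₂] with a h₁ h₂ hadd
  rw [hadd]
  exact (norm_sub_le_norm_sub_add_norm_sub _ _ _).trans (add_le_add h₁ h₂)

theorem ae_norm_le_add (ι : M →ₗ[ℝ] (α →ₘ[μ] ℝ)) {F P : α → X} {m₁ m₂ : M}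
    (h₁ : ∀ᵐ a ∂μ, ‖F a - P a‖ ≤ ι m₁ a) (h₂ : ∀ᵐ a ∂μ, ‖P a‖ ≤ ι m₂ a) :
    ∀ᵐ a ∂μ, ‖F a‖ ≤ ι (m₁ + m₂) a := by
  filter_upwards [h₁, h₂, ae_map_add_apply ι m₁ m₂] with a h₁ h₂ hadd
  rw [hadd, add_comm]
  exact (norm_le_insert' _ _).trans (add_le_add h₂ h₁)

theorem ae_norm_add_sub_add_le (ι : M →ₗ[ℝ] (α →ₘ[μ] ℝ)) {F P F' P' : α → X} {m m' : M}
    (h : ∀ᵐ a ∂μ, ‖F a - P a‖ ≤ ι m a) (h' : ∀ᵐ a ∂μ, ‖F' a - P' a‖ ≤ ι m' a) :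
    ∀ᵐ a ∂μ, ‖(F + F') a - (P + P') a‖ ≤ ι (m + m') a := by
  filter_upwards [h, h', ae_map_add_apply ι m m'] with a h h' hadd
  rw [hadd, Pi.add_apply, Pi.add_apply, add_sub_add_comm]
  exact (norm_add_le _ _).trans (add_le_add h h')

variable [NormedSpace ℝ X]

theorem ae_norm_smul_sub_smul_le (ι : M →ₗ[ℝ] (α →ₘ[μ] ℝ)) {F P : α → X} {m : M}
    (h : ∀ᵐ a ∂μ, ‖F a - P a‖ ≤ ι m a) (c : ℝ) :
    ∀ᵐ a ∂μ, ‖(c • F) a - (c • P) a‖ ≤ ι (|c| • m) a := by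
  filter_upwards [h, ae_map_smul_apply ι |c| m] with a h hsmul
  rw [hsmul, Pi.smul_apply, Pi.smul_apply, ← smul_sub, norm_smul, Real.norm_eq_abs]
  exact mul_le_mul_of_nonneg_left h (abs_nonneg c)

/-- The function on `α` representing the tensor `∑ j, u j ⊗ x j`. -/
noncomputable def tensorSum {k : Type*} [Fintype k] (ι : M →ₗ[ℝ] (α →ₘ[μ] ℝ)) (u : k → M)
    (x : k → X) : α → X :=
  fun a => ∑ j, ι (u j) a • x j

variable (ι : M →ₗ[ℝ] (α →ₘ[μ] ℝ))

theorem tensorSum_append {m n : ℕ} (u : Fin m → M) (x : Fin m → X) (u' : Fin n → M)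
    (x' : Fin n → X) :
    tensorSum ι (Fin.append u u') (Fin.append x x') = tensorSum ι u x + tensorSum ι u' x' := by
  ext a
  simp [tensorSum, Fin.sum_univ_add]

theorem tensorSum_append_neg {m n : ℕ} (u : Fin m → M) (x : Fin m → X) (u' : Fin n → M)
    (x' : Fin n → X) :
    tensorSum ι (Fin.append u u') (Fin.append x (-x')) = tensorSum ι u x - tensorSum ι u' x' := by
  rw [tensorSum_append, sub_eq_add_neg]
  congr
  ext a
  simp [tensorSum]

theorem tensorSum_smul {k : Type*} [Fintype k] (u : k → M) (x : k → X) (c : ℝ) :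
    tensorSum ι u (c • x) = c • tensorSum ι u x := by
  ext a
  simp [tensorSum, Finset.smul_sum, smul_comm c]

theorem aestronglyMeasurable_tensorSum {k : Type*} [Fintype k] (u : k → M) (x : k → X) :
    AEStronglyMeasurable (tensorSum ι u x) μ :=
  Finset.aestronglyMeasurable_fun_sum _ fun _ _ =>
    (AEEqFun.aestronglyMeasurable _).smul aestronglyMeasurable_const

theorem ae_dual_tensorSum {k : Type*} [Fintype k] (u : k → M) (x : k → X)
    (φ : StrongDual ℝ X) :
    ∀ᵐ a ∂μ, φ (tensorSum ι u x a) = ι (∑ j, φ (x j) • u j) a := by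
  filter_upwards [ae_map_sum_smul_apply ι (fun j => φ (x j)) u] with a ha
  rw [ha, tensorSum, map_sum]
  exact Finset.sum_congr rfl fun j _ => by rw [map_smul, smul_eq_mul, mul_comm]

end Tensor

namespace IsBanachFunctionSpace

variable {α E : Type*} [MeasurableSpace α] {μ : Measure α}
  [NormedAddCommGroup E] [Lattice E] [HasSolidNorm E] [IsOrderedAddMonoid E] [NormedSpace ℝ E]
  [CompleteSpace E] {ι : E →ₗ[ℝ] (α →ₘ[μ] ℝ)} (hE : IsBanachFunctionSpace μ E ι)
  {X : Type*} [NormedAddCommGroup X]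

include hE

theorem le_of_ae_le {e₁ e₂ : E} (h : ∀ᵐ a ∂μ, ι e₁ a ≤ ι e₂ a) : e₁ ≤ e₂ := by
  have habs : ι |e₂ - e₁| = ι (e₂ - e₁) := AEEqFun.ext <| by
    filter_upwards [hE.map_abs (e₂ - e₁), ae_map_sub_apply ι e₂ e₁, h] with a habs hsub h
    rw [habs, hsub, abs_of_nonneg (sub_nonneg.2 h)]
  exact sub_nonneg.1 (hE.inj habs ▸ abs_nonneg _)

theorem ae_le_of_le {e₁ e₂ : E} (h : e₁ ≤ e₂) : ∀ᵐ a ∂μ, ι e₁ a ≤ ι e₂ a := by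
  filter_upwards [hE.map_abs (e₂ - e₁), ae_map_sub_apply ι e₂ e₁] with a habs hsub
  rw [abs_of_nonneg (sub_nonneg.2 h), hsub] at habs
  exact sub_nonneg.1 (habs ▸ abs_nonneg _)

theorem abs_le_of_ae_abs_le {e₁ e₂ : E} (h : ∀ᵐ a ∂μ, |ι e₁ a| ≤ ι e₂ a) : |e₁| ≤ e₂ :=
  hE.le_of_ae_le <| by
    filter_upwards [h, hE.map_abs e₁] with a h habs
    rwa [habs]

theorem ae_abs_le_of_abs_le {e₁ e₂ : E} (h : |e₁| ≤ e₂) : ∀ᵐ a ∂μ, |ι e₁ a| ≤ ι e₂ a := by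
  filter_upwards [hE.ae_le_of_le h, hE.map_abs e₁] with a h habs
  rwa [← habs]

theorem norm_le_of_memKB {f : α → X} {e₁ e₂ : E} (hf : MemKB ι f e₁)
    (h : ∀ᵐ a ∂μ, ‖f a‖ ≤ ι e₂ a) : ‖e₁‖ ≤ ‖e₂‖ := by
  have habs : |e₁| ≤ e₂ := hE.abs_le_of_ae_abs_le <| by
    filter_upwards [hf.2, h] with a hf h
    rwa [← hf, abs_norm]
  exact norm_le_norm_of_abs_le_abs (habs.trans (le_abs_self e₂))

theorem exists_memKB_of_ae_norm_le {f : α → X} (hf : AEStronglyMeasurable f μ) {e : E}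
    (h : ∀ᵐ a ∂μ, ‖f a‖ ≤ ι e a) : ∃ e', MemKB ι f e' ∧ ‖e'‖ ≤ ‖e‖ := by
  obtain ⟨e', he'⟩ := hE.ideal (AEEqFun.mk _ hf.norm) e <| by
    filter_upwards [h, AEEqFun.coeFn_mk _ hf.norm] with a h hmk
    rw [hmk, abs_norm]
    exact h.trans (le_abs_self _)
  have hmem : MemKB ι f e' := ⟨hf, he' ▸ (AEEqFun.coeFn_mk _ hf.norm).symm⟩
  exact ⟨e', hmem, hE.norm_le_of_memKB hmem h⟩

theorem ae_eq_zero_of_forall_ae_norm_le {F : α → X} (hF : AEStronglyMeasurable F μ)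
    (H : ∀ δ > 0, ∃ e : E, (∀ᵐ a ∂μ, ‖F a‖ ≤ ι e a) ∧ ‖e‖ < δ) : F =ᵐ[μ] 0 := by
  obtain ⟨e, he, -⟩ := H 1 one_pos
  obtain ⟨e', hmem, -⟩ := hE.exists_memKB_of_ae_norm_le hF he
  have he' : e' = 0 := norm_le_zero_iff.1 <| le_of_forall_pos_lt_add fun δ hδ => by
    obtain ⟨e, he, hδe⟩ := H δ hδ
    simpa using (hE.norm_le_of_memKB hmem he).trans_lt hδe
  filter_upwards [hmem.2, ae_map_zero_apply ι] with a hnorm hzero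
  rw [he', hzero] at hnorm
  exact norm_eq_zero.1 hnorm

theorem exists_ae_tendsto_of_summable [CompleteSpace X] {T : ℕ → α → X} {h : ℕ → E}
    (h0 : ∀ n, 0 ≤ h n) (hsum : Summable h)
    (hstep : ∀ n, ∀ᵐ a ∂μ, ‖T n a - T (n + 1) a‖ ≤ ι (h n) a) :
    ∃ φ : α → X, (∀ᵐ a ∂μ, Tendsto (T · a) atTop (𝓝 (φ a))) ∧
      ∀ n, ∀ᵐ a ∂μ, ‖T n a - φ a‖ ≤ ι (∑' i, h (i + n)) a := by
  have hpartial : ∀ᵐ a ∂μ, ∀ n N,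
      ∑ i ∈ Finset.range N, ι (h (n + i)) a ≤ ι (∑' i, h (i + n)) a := by
    refine ae_all_iff.2 fun n => ae_all_iff.2 fun N => ?_
    have hle : ∑ i ∈ Finset.range N, h (n + i) ≤ ∑' i, h (i + n) := by
      simp_rw [add_comm n]
      exact ((summable_nat_add_iff n).2 hsum).sum_le_tsum _ fun i _ => h0 _
    filter_upwards [ae_map_sum_apply ι _ _, hE.ae_le_of_le hle] with a hsum hle
    rwa [← hsum]
  have hgood : ∀ᵐ a ∂μ, ∃ y, Tendsto (T · a) atTop (𝓝 y) ∧
      ∀ n, ‖T n a - y‖ ≤ ι (∑' i, h (i + n)) a := by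
    filter_upwards [hpartial, ae_all_iff.2 hstep] with a hpartial hstep
    have hdist : ∀ n, dist (T n a) (T (n + 1) a) ≤ ι (h n) a := fun n =>
      (dist_eq_norm _ _).trans_le (hstep n)
    have hnonneg : ∀ n, 0 ≤ ι (h n) a := fun n => dist_nonneg.trans (hdist n)
    have hsummable : Summable fun n => ι (h n) a :=
      summable_of_sum_range_le hnonneg (by simpa using hpartial 0)
    obtain ⟨y, hy⟩ := cauchySeq_tendsto_of_complete
      (cauchySeq_of_dist_le_of_summable _ hdist hsummable)
    refine ⟨y, hy, fun n => ?_⟩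
    rw [← dist_eq_norm]
    exact (dist_le_tsum_of_dist_le_of_tendsto _ hdist hsummable hy n).trans
      (Real.tsum_le_of_sum_range_le (fun i => hnonneg _) (hpartial n))
  refine ⟨fun a => limUnder atTop (T · a), ?_, fun n => ?_⟩ <;>
    filter_upwards [hgood] with a ⟨y, hy, hbound⟩ <;> rw [hy.limUnder_eq]
  exacts [hy, hbound n]

variable [NormedSpace ℝ X]

theorem ae_norm_tensorSum_le {k : Type*} [Fintype k] (u : k → E) (x : k → X) :
    ∀ᵐ a ∂μ, ‖tensorSum ι u x a‖ ≤ ι (∑ j, ‖x j‖ • |u j|) a := by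
  filter_upwards [ae_map_sum_smul_apply ι (fun j => ‖x j‖) fun j => |u j|,
    ae_all_iff.2 fun j => hE.map_abs (u j)] with a hsum habs
  rw [hsum]
  refine (norm_sum_le _ _).trans (Finset.sum_le_sum fun j _ => ?_)
  rw [habs j, norm_smul, Real.norm_eq_abs, mul_comm]

theorem exists_memKB_of_inTensorClosure {f : α → X} (hf : InTensorClosure ι f) :
    ∃ e, MemKB ι f e := by
  obtain ⟨n, u, x, e, he, -⟩ := hf.2 1 one_pos
  obtain ⟨e', hmem, -⟩ := hE.exists_memKB_of_ae_norm_le hf.1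
    (ae_norm_le_add ι he.le (hE.ae_norm_tensorSum_le u x))
  exact ⟨e', hmem⟩

end IsBanachFunctionSpace

theorem exists_countable_norming_of_isSeparable {X : Type*} [NormedAddCommGroup X]
    [NormedSpace ℝ X] {t : Set X} (ht : TopologicalSpace.IsSeparable t) :
    ∃ D : Set (StrongDual ℝ X), D.Countable ∧ (∀ φ ∈ D, ‖φ‖ ≤ 1) ∧
      ∀ y ∈ t, ∀ ε > 0, ∃ φ ∈ D, ‖y‖ < φ y + ε := by
  obtain ⟨c, hc, htc⟩ := ht
  choose φ hφ using fun z : X => exists_dual_vector'' ℝ z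
  refine ⟨φ '' c, hc.image φ, by rintro _ ⟨z, -, rfl⟩; exact (hφ z).1, fun y hy ε hε => ?_⟩
  obtain ⟨z, hz, hyz⟩ := Metric.mem_closure_iff.1 (htc hy) (ε / 2) (half_pos hε)
  refine ⟨φ z, Set.mem_image_of_mem φ hz, ?_⟩
  have hφyz : |φ z (y - z)| ≤ ‖y - z‖ := by
    simpa using (φ z).le_of_opNorm_le (hφ z).1 (y - z)
  have hφz : φ z z = ‖z‖ := by simpa using (hφ z).2
  rw [map_sub, hφz] at hφyz
  rw [dist_eq_norm] at hyz
  linarith [norm_le_insert' y z, (abs_le.1 hφyz).1]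

section Domination

variable {α β E G : Type*} [MeasurableSpace α] [MeasurableSpace β]
  {μ : Measure α} {ν : Measure β}
  [NormedAddCommGroup E] [Lattice E] [HasSolidNorm E] [IsOrderedAddMonoid E] [NormedSpace ℝ E]
  [CompleteSpace E]
  [NormedAddCommGroup G] [Lattice G] [HasSolidNorm G] [IsOrderedAddMonoid G] [NormedSpace ℝ G]
  [CompleteSpace G]
  {X : Type*} [NormedAddCommGroup X] [NormedSpace ℝ X]
  {ιE : E →ₗ[ℝ] (α →ₘ[μ] ℝ)} {ιG : G →ₗ[ℝ] (β →ₘ[ν] ℝ)}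
  (hE : IsBanachFunctionSpace μ E ιE) (hG : IsBanachFunctionSpace ν G ιG)
  {S R : E →L[ℝ] G} (hRpos : ∀ e : E, 0 ≤ e → 0 ≤ R e) (hdom : ∀ e : E, |S e| ≤ R |e|)

include hE hG hRpos hdom

theorem ae_norm_tensorSum_comp_le {k : Type*} [Fintype k] (u : k → E) (x : k → X) {e : E}
    (he : ∀ᵐ a ∂μ, ‖tensorSum ιE u x a‖ ≤ ιE e a) :
    ∀ᵐ b ∂ν, ‖tensorSum (ιG ∘ₗ (S : E →ₗ[ℝ] G)) u x b‖ ≤ ιG (R e) b := by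
  obtain ⟨D, hDc, hD1, hDnorm⟩ := exists_countable_norming_of_isSeparable
    (TopologicalSpace.isSeparable_range (f := fun c : k → ℝ => ∑ j, c j • x j) (by fun_prop))
  have hw : ∀ φ ∈ D, |S (∑ j, φ (x j) • u j)| ≤ R e := fun φ hφ => by
    have habs : |∑ j, φ (x j) • u j| ≤ e := hE.abs_le_of_ae_abs_le <| by
      filter_upwards [ae_dual_tensorSum ιE u x φ, he] with a hφa he
      rw [← hφa]
      have hφle := φ.le_of_opNorm_le (hD1 φ hφ) (tensorSum ιE u x a)
      rw [one_mul, Real.norm_eq_abs] at hφle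
      exact hφle.trans he
    exact (hdom _).trans (sub_nonneg.1 (by simpa using hRpos _ (sub_nonneg.2 habs)))
  have hae : ∀ᵐ b ∂ν, ∀ φ ∈ D, φ (tensorSum (ιG ∘ₗ (S : E →ₗ[ℝ] G)) u x b) ≤ ιG (R e) b := by
    refine (ae_ball_iff hDc).2 fun φ hφ => ?_
    filter_upwards [ae_dual_tensorSum (ιG ∘ₗ (S : E →ₗ[ℝ] G)) u x φ,
      hG.ae_abs_le_of_abs_le (hw φ hφ)] with b hφb habs
    rw [hφb]
    exact (le_abs_self _).trans habs
  filter_upwards [hae] with b hb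
  refine le_of_forall_pos_le_add fun ε hε => ?_
  obtain ⟨φ, hφ, hlt⟩ :=
    hDnorm (tensorSum (ιG ∘ₗ (S : E →ₗ[ℝ] G)) u x b) ⟨fun j => ιG (S (u j)) b, rfl⟩ ε hε
  linarith [hb φ hφ]

theorem ae_norm_tensorSum_comp_sub_le {m n : ℕ} (u : Fin m → E) (x : Fin m → X)
    (u' : Fin n → E) (x' : Fin n → X) {e : E}
    (he : ∀ᵐ a ∂μ, ‖tensorSum ιE u x a - tensorSum ιE u' x' a‖ ≤ ιE e a) :
    ∀ᵐ b ∂ν, ‖tensorSum (ιG ∘ₗ (S : E →ₗ[ℝ] G)) u x b -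
      tensorSum (ιG ∘ₗ (S : E →ₗ[ℝ] G)) u' x' b‖ ≤ ιG (R e) b := by
  have := ae_norm_tensorSum_comp_le hE hG hRpos hdom (Fin.append u u') (Fin.append x (-x'))
    (by simpa only [tensorSum_append_neg, Pi.sub_apply] using he)
  simpa only [tensorSum_append_neg, Pi.sub_apply] using this

end Domination

section Closure

variable {α E : Type*} [MeasurableSpace α] {μ : Measure α}
  [NormedAddCommGroup E] [NormedSpace ℝ E]
  {X : Type*} [NormedAddCommGroup X] [NormedSpace ℝ X] {ι : E →ₗ[ℝ] (α →ₘ[μ] ℝ)}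

theorem inTensorClosure_tensorSum {n : ℕ} (u : Fin n → E) (x : Fin n → X) :
    InTensorClosure ι (tensorSum ι u x) :=
  ⟨aestronglyMeasurable_tensorSum ι u x, fun ε hε => ⟨n, u, x, 0,
    (ae_map_zero_apply ι).mono fun a h => by simp only [h, tensorSum, sub_self, norm_zero],
    by simpa using hε⟩⟩

theorem InTensorClosure.sub_tensorSum {f : α → X} (hf : InTensorClosure ι f) {n : ℕ}
    (u : Fin n → E) (x : Fin n → X) : InTensorClosure ι (f - tensorSum ι u x) := by
  refine ⟨hf.1.sub (aestronglyMeasurable_tensorSum ι u x), fun ε hε => ?_⟩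
  obtain ⟨m, u', x', e, he, hen⟩ := hf.2 ε hε
  have hdiff : (fun a => ‖(f - tensorSum ι u x) a -
      tensorSum ι (Fin.append u' u) (Fin.append x' (-x)) a‖) =
      fun a => ‖f a - tensorSum ι u' x' a‖ := by
    simp only [tensorSum_append_neg, Pi.sub_apply, sub_sub_sub_cancel_right]
  exact ⟨m + n, Fin.append u' u, Fin.append x' (-x), e, (EventuallyEq.of_eq hdiff).trans he, hen⟩

end Closure

section TensorImage

variable {α β E G : Type*} [MeasurableSpace α] [MeasurableSpace β]
  {μ : Measure α} {ν : Measure β}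
  [NormedAddCommGroup E] [NormedSpace ℝ E] [NormedAddCommGroup G] [NormedSpace ℝ G]
  {X : Type*} [NormedAddCommGroup X] [NormedSpace ℝ X]

/-- `φ` is the value at `f` of the extension of `S ⊗ I_X` to the closure of `E ⊗ X`. -/
def IsTensorImage (ιE : E →ₗ[ℝ] (α →ₘ[μ] ℝ)) (ιG : G →ₗ[ℝ] (β →ₘ[ν] ℝ)) (S : E →L[ℝ] G)
    (f : α → X) (φ : β → X) : Prop :=
  ∀ ε > 0, ∃ (n : ℕ) (u : Fin n → E) (x : Fin n → X) (e : E) (g : G),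
    (∀ᵐ a ∂μ, ‖f a - tensorSum ιE u x a‖ ≤ ιE e a) ∧ ‖e‖ < ε ∧
    (∀ᵐ b ∂ν, ‖φ b - tensorSum (ιG ∘ₗ (S : E →ₗ[ℝ] G)) u x b‖ ≤ ιG g b) ∧ ‖g‖ < ε

open Classical in
noncomputable def tensorExtension (ιE : E →ₗ[ℝ] (α →ₘ[μ] ℝ)) (ιG : G →ₗ[ℝ] (β →ₘ[ν] ℝ))
    (S : E →L[ℝ] G) (f : α → X) : β → X :=
  if h : ∃ φ, AEStronglyMeasurable φ ν ∧ IsTensorImage ιE ιG S f φ then h.choose else 0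

variable {ιE : E →ₗ[ℝ] (α →ₘ[μ] ℝ)} {ιG : G →ₗ[ℝ] (β →ₘ[ν] ℝ)} {S : E →L[ℝ] G}
  {f f' : α → X} {φ φ' : β → X}

theorem isTensorImage_tensorSum {n : ℕ} (u : Fin n → E) (x : Fin n → X) :
    IsTensorImage ιE ιG S (tensorSum ιE u x) (tensorSum (ιG ∘ₗ (S : E →ₗ[ℝ] G)) u x) :=
  fun ε hε => ⟨n, u, x, 0, 0,
    (ae_map_zero_apply ιE).mono fun a h => by rw [h, sub_self, norm_zero], by simpa using hε,
    (ae_map_zero_apply ιG).mono fun b h => by rw [h, sub_self, norm_zero], by simpa using hε⟩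

namespace IsTensorImage

theorem congr_left (h : IsTensorImage ιE ιG S f φ) (hf : f =ᵐ[μ] f') :
    IsTensorImage ιE ιG S f' φ := fun ε hε => by
  obtain ⟨n, u, x, e, g, he, hen, hg, hgn⟩ := h ε hε
  refine ⟨n, u, x, e, g, ?_, hen, hg, hgn⟩
  filter_upwards [he, hf] with a he hf
  rwa [← hf]

theorem add (h : IsTensorImage ιE ιG S f φ) (h' : IsTensorImage ιE ιG S f' φ') :
    IsTensorImage ιE ιG S (f + f') (φ + φ') := fun ε hε => by
  obtain ⟨n, u, x, e, g, he, hen, hg, hgn⟩ := h (ε / 2) (half_pos hε)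
  obtain ⟨n', u', x', e', g', he', hen', hg', hgn'⟩ := h' (ε / 2) (half_pos hε)
  refine ⟨n + n', Fin.append u u', Fin.append x x', e + e', g + g', ?_,
    (norm_add_le _ _).trans_lt (by linarith), ?_, (norm_add_le _ _).trans_lt (by linarith)⟩
  · simpa only [tensorSum_append] using ae_norm_add_sub_add_le ιE he he'
  · simpa only [tensorSum_append] using ae_norm_add_sub_add_le ιG hg hg'

theorem const_smul (h : IsTensorImage ιE ιG S f φ) (c : ℝ) :
    IsTensorImage ιE ιG S (c • f) (c • φ) := fun ε hε => by
  have hδ : 0 < ε / (|c| + 1) := by positivity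
  have hsmall : ∀ r : ℝ, 0 ≤ r → r < ε / (|c| + 1) → |c| * r < ε := fun r hr₀ hr => by
    rw [lt_div_iff₀ (by positivity)] at hr
    nlinarith [abs_nonneg c]
  obtain ⟨n, u, x, e, g, he, hen, hg, hgn⟩ := h _ hδ
  refine ⟨n, u, c • x, |c| • e, |c| • g, ?_, ?_, ?_, ?_⟩
  · simpa only [tensorSum_smul] using ae_norm_smul_sub_smul_le ιE he c
  · simpa only [norm_smul, Real.norm_eq_abs, abs_abs] using hsmall _ (norm_nonneg _) hen
  · simpa only [tensorSum_smul] using ae_norm_smul_sub_smul_le ιG hg c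
  · simpa only [norm_smul, Real.norm_eq_abs, abs_abs] using hsmall _ (norm_nonneg _) hgn

end IsTensorImage

theorem tensorExtension_spec_of_exists
    (h : ∃ φ, AEStronglyMeasurable φ ν ∧ IsTensorImage ιE ιG S f φ) :
    AEStronglyMeasurable (tensorExtension ιE ιG S f) ν ∧
      IsTensorImage ιE ιG S f (tensorExtension ιE ιG S f) := by
  rw [tensorExtension, dif_pos h]
  exact h.choose_spec

end TensorImage

section TargetSpace

variable {α β E G : Type*} [MeasurableSpace α] [MeasurableSpace β]
  {μ : Measure α} {ν : Measure β} [NormedAddCommGroup E] [NormedSpace ℝ E]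
  [NormedAddCommGroup G] [Lattice G] [HasSolidNorm G] [IsOrderedAddMonoid G] [NormedSpace ℝ G]
  [CompleteSpace G]
  {X : Type*} [NormedAddCommGroup X] [NormedSpace ℝ X]
  {ιE : E →ₗ[ℝ] (α →ₘ[μ] ℝ)} {ιG : G →ₗ[ℝ] (β →ₘ[ν] ℝ)} {S : E →L[ℝ] G} {f : α → X}

theorem IsTensorImage.inTensorClosure (hG : IsBanachFunctionSpace ν G ιG) {φ : β → X}
    (h : IsTensorImage ιE ιG S f φ) (hφ : AEStronglyMeasurable φ ν) :
    InTensorClosure ιG φ := by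
  refine ⟨hφ, fun ε hε => ?_⟩
  obtain ⟨n, u, x, -, g, -, -, hg, hgn⟩ := h ε hε
  obtain ⟨g', hmem, hg'⟩ :=
    hG.exists_memKB_of_ae_norm_le (hφ.sub (aestronglyMeasurable_tensorSum _ u x)) hg
  exact ⟨n, fun j => S (u j), x, g', hmem.2, hg'.trans_lt hgn⟩

theorem IsTensorClosureExtension.isTensorImage (hG : IsBanachFunctionSpace ν G ιG) {C : ℝ}
    {SX : (α → X) → (β → X)} (hSX : IsTensorClosureExtension ιE ιG S C SX)
    (hf : InTensorClosure ιE f) : IsTensorImage ιE ιG S f (SX f) := by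
  obtain ⟨-, hcl, hag, hadd, -, hbd⟩ := hSX
  intro ε hε
  have hδ : 0 < ε / (|C| + 1) := by positivity
  obtain ⟨n, u, x, e, he, hen⟩ := hf.2 _ hδ
  have ht := inTensorClosure_tensorSum (ι := ιE) u x
  have hr := hf.sub_tensorSum u x
  obtain ⟨g, hg⟩ := hG.exists_memKB_of_inTensorClosure (hcl _ hr)
  have hgn : ‖g‖ < ε := calc
    ‖g‖ ≤ C * ‖e‖ := hbd _ e g hr ⟨hr.1, he⟩ hg
    _ ≤ |C| * (ε / (|C| + 1)) := by gcongr; exact le_abs_self C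
    _ < ε := by
      rw [mul_div_assoc', div_lt_iff₀ (by positivity)]
      nlinarith
  refine ⟨n, u, x, e, g, he.le, hen.trans_le (div_le_self hε.le (by linarith [abs_nonneg C])),
    ?_, hgn⟩
  have hsplit : SX f =ᵐ[ν] SX (tensorSum ιE u x) + SX (f - tensorSum ιE u x) := by
    simpa using hadd _ _ ht hr
  have hagt : SX (tensorSum ιE u x) =ᵐ[ν] tensorSum (ιG ∘ₗ (S : E →ₗ[ℝ] G)) u x :=
    hag n u x _ .rfl
  filter_upwards [hsplit, hagt, hg.2] with b hsplit hag hg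
  rw [hsplit, Pi.add_apply, hag, add_sub_cancel_left]
  exact hg.le

end TargetSpace

section Extension

variable {α β E G : Type*} [MeasurableSpace α] [MeasurableSpace β]
  {μ : Measure α} {ν : Measure β}
  [NormedAddCommGroup E] [Lattice E] [HasSolidNorm E] [IsOrderedAddMonoid E] [NormedSpace ℝ E]
  [CompleteSpace E]
  [NormedAddCommGroup G] [Lattice G] [HasSolidNorm G] [IsOrderedAddMonoid G] [NormedSpace ℝ G]
  [CompleteSpace G]
  {X : Type*} [NormedAddCommGroup X] [NormedSpace ℝ X]
  {ιE : E →ₗ[ℝ] (α →ₘ[μ] ℝ)} {ιG : G →ₗ[ℝ] (β →ₘ[ν] ℝ)} {S : E →L[ℝ] G} {f : α → X}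
  (hE : IsBanachFunctionSpace μ E ιE) (hG : IsBanachFunctionSpace ν G ιG)
  {R : E →L[ℝ] G} (hRpos : ∀ e : E, 0 ≤ e → 0 ≤ R e) (hdom : ∀ e : E, |S e| ≤ R |e|)

include hE hG hRpos hdom

theorem IsTensorImage.ae_eq {φ φ' : β → X} (h : IsTensorImage ιE ιG S f φ)
    (h' : IsTensorImage ιE ιG S f φ') (hφ : AEStronglyMeasurable φ ν)
    (hφ' : AEStronglyMeasurable φ' ν) : φ =ᵐ[ν] φ' := by
  have hzero : φ - φ' =ᵐ[ν] 0 := hG.ae_eq_zero_of_forall_ae_norm_le (hφ.sub hφ') fun δ hδ => by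
    set ε := δ / (2 * (1 + ‖R‖))
    have hε : 0 < ε := by positivity
    obtain ⟨n, u, x, e, g, he, hen, hg, hgn⟩ := h ε hε
    obtain ⟨n', u', x', e', g', he', hen', hg', hgn'⟩ := h' ε hε
    have htt' := ae_norm_sub_le_add ιE (he.mono fun a h => by rwa [norm_sub_rev]) he'
    have hTT' := ae_norm_tensorSum_comp_sub_le hE hG hRpos hdom u x u' x' htt'
    have hbound := ae_norm_sub_le_add ιG (ae_norm_sub_le_add ιG hg hTT')
      (hg'.mono fun b h => by rwa [norm_sub_rev])
    refine ⟨g + R (e + e') + g', hbound, ?_⟩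
    have hR : ‖R (e + e')‖ ≤ ‖R‖ * (2 * ε) := calc
      ‖R (e + e')‖ ≤ ‖R‖ * ‖e + e'‖ := R.le_opNorm _
      _ ≤ ‖R‖ * (2 * ε) := by gcongr; linarith [norm_add_le e e']
    calc ‖g + R (e + e') + g'‖ ≤ ‖g‖ + ‖R (e + e')‖ + ‖g'‖ := norm_add₃_le
      _ < ε + ‖R‖ * (2 * ε) + ε := by linarith
      _ = δ := by simp only [ε]; field_simp; ring
  filter_upwards [hzero] with b hb
  exact sub_eq_zero.1 hb

theorem IsTensorImage.norm_le {φ : β → X} {e : E} {g : G} (h : IsTensorImage ιE ιG S f φ)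
    (hf : MemKB ιE f e) (hφ : MemKB ιG φ g) : ‖g‖ ≤ ‖R‖ * ‖e‖ := by
  refine le_of_forall_pos_le_add fun δ hδ => ?_
  set ε := δ / (1 + ‖R‖)
  obtain ⟨n, u, x, e', g', he', he'n, hg', hg'n⟩ := h ε (by positivity)
  have ht : ∀ᵐ a ∂μ, ‖tensorSum ιE u x a‖ ≤ ιE (e' + e) a :=
    ae_norm_le_add ιE (he'.mono fun a h => by rwa [norm_sub_rev]) hf.2.le
  have hφ_le := ae_norm_le_add ιG hg' (ae_norm_tensorSum_comp_le hE hG hRpos hdom u x ht)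
  have hR : ‖R (e' + e)‖ ≤ ‖R‖ * (ε + ‖e‖) := calc
    ‖R (e' + e)‖ ≤ ‖R‖ * ‖e' + e‖ := R.le_opNorm _
    _ ≤ ‖R‖ * (ε + ‖e‖) := by gcongr; linarith [norm_add_le e' e]
  calc ‖g‖ ≤ ‖g' + R (e' + e)‖ := hG.norm_le_of_memKB hφ hφ_le
    _ ≤ ‖g'‖ + ‖R (e' + e)‖ := norm_add_le _ _
    _ ≤ ‖R‖ * ‖e‖ + (1 + ‖R‖) * ε := by nlinarith
    _ = ‖R‖ * ‖e‖ + δ := by simp only [ε]; field_simp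

theorem exists_isTensorImage [CompleteSpace X] (hf : InTensorClosure ιE f) :
    ∃ φ, AEStronglyMeasurable φ ν ∧ IsTensorImage ιE ιG S f φ := by
  choose k u x e hrep hnorm using fun n : ℕ => hf.2 ((1 / 2) ^ n) (by positivity)
  set T : ℕ → β → X := fun n => tensorSum (ιG ∘ₗ (S : E →ₗ[ℝ] G)) (u n) (x n)
  set h : ℕ → G := fun n => R (e n + e (n + 1))
  have he0 : ∀ n, 0 ≤ e n := fun n => (abs_nonneg _).trans <| hE.abs_le_of_ae_abs_le <| by
    filter_upwards [hrep n] with a ha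
    rw [← ha, abs_norm]
  have hstep : ∀ n, ∀ᵐ b ∂ν, ‖T n b - T (n + 1) b‖ ≤ ιG (h n) b := fun n =>
    ae_norm_tensorSum_comp_sub_le hE hG hRpos hdom _ _ _ _ <|
      ae_norm_sub_le_add ιE (P := f) ((hrep n).mono fun a h => by rw [norm_sub_rev]; exact h.le)
        (hrep (n + 1)).le
  have hsum_e : Summable fun n => ‖e n‖ := .of_nonneg_of_le (fun n => norm_nonneg _)
    (fun n => (hnorm n).le) summable_geometric_two
  have hsum : Summable h := .of_norm_bounded
    ((hsum_e.add ((summable_nat_add_iff 1).2 hsum_e)).mul_left ‖R‖) fun n =>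
      (R.le_opNorm _).trans (by gcongr; exact norm_add_le _ _)
  obtain ⟨φ, hlim, htail⟩ := hG.exists_ae_tendsto_of_summable
    (fun n => hRpos _ (add_nonneg (he0 n) (he0 (n + 1)))) hsum hstep
  refine ⟨φ, aestronglyMeasurable_of_tendsto_ae atTop
    (fun n => aestronglyMeasurable_tensorSum _ _ _) hlim, fun ε hε => ?_⟩
  have he_small : ∀ᶠ n in atTop, ‖e n‖ < ε :=
    ((tendsto_pow_atTop_nhds_zero_of_lt_one (by norm_num) (by norm_num)).eventually
      (gt_mem_nhds hε)).mono fun n hn => (hnorm n).trans hn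
  have htail_small : ∀ᶠ n in atTop, ‖∑' i, h (i + n)‖ < ε :=
    (tendsto_zero_iff_norm_tendsto_zero.1 (tendsto_sum_nat_add h)).eventually (gt_mem_nhds hε)
  obtain ⟨n, hen, htn⟩ := (he_small.and htail_small).exists
  exact ⟨k n, u n, x n, e n, _, (hrep n).le, hen,
    (htail n).mono fun b hb => by rwa [norm_sub_rev], htn⟩

theorem IsTensorImage.tensorExtension_ae_eq {φ : β → X} (h : IsTensorImage ιE ιG S f φ)
    (hφ : AEStronglyMeasurable φ ν) : tensorExtension ιE ιG S f =ᵐ[ν] φ :=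
  have hspec := tensorExtension_spec_of_exists ⟨φ, hφ, h⟩
  hspec.2.ae_eq hE hG hRpos hdom h hspec.1 hφ

theorem InTensorClosure.tensorExtension_spec [CompleteSpace X] (hf : InTensorClosure ιE f) :
    AEStronglyMeasurable (tensorExtension ιE ιG S f) ν ∧
      IsTensorImage ιE ιG S f (tensorExtension ιE ιG S f) :=
  tensorExtension_spec_of_exists (exists_isTensorImage hE hG hRpos hdom hf)

end Extension

section Ext

variable {α β E G : Type*} [MeasurableSpace α] [MeasurableSpace β]
  {μ : Measure α} {ν : Measure β}
  [NormedAddCommGroup E] [Lattice E] [HasSolidNorm E] [IsOrderedAddMonoid E] [NormedSpace ℝ E]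
  [NormedAddCommGroup G] [Lattice G] [HasSolidNorm G] [IsOrderedAddMonoid G] [NormedSpace ℝ G]
  {X : Type*} [NormedAddCommGroup X] [NormedSpace ℝ X]

/-- **Bounded extension of the tensor extension of a dominated operator.**
If `S : E → G` is dominated by a positive operator `R`, then `S ⊗ I_X` extends
uniquely to a bounded linear operator, of norm at most `‖R‖`, from the closure of
`E ⊗ X` in `E(X)` to the closure of `G ⊗ X` in `G(X)`. -/
theorem tensor_extension_of_dominated
    [CompleteSpace E] [CompleteSpace G] [CompleteSpace X]
    (ιE : E →ₗ[ℝ] (α →ₘ[μ] ℝ)) (ιG : G →ₗ[ℝ] (β →ₘ[ν] ℝ))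
    (hE : IsBanachFunctionSpace μ E ιE) (hG : IsBanachFunctionSpace ν G ιG)
    (S : E →L[ℝ] G) (R : E →L[ℝ] G)
    (hRpos : ∀ e : E, 0 ≤ e → 0 ≤ R e)
    (hdom : ∀ e : E, |S e| ≤ R |e|) :
    ∃ SX : (α → X) → (β → X),
      IsTensorClosureExtension (X := X) ιE ιG S ‖R‖ SX ∧
      ∀ (C' : ℝ) (SX' : (α → X) → (β → X)),
        IsTensorClosureExtension (X := X) ιE ιG S C' SX' →
        ∀ f : α → X, InTensorClosure ιE f → SX' f =ᵐ[ν] SX f := by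
  have hT := fun (f : α → X) (hf : InTensorClosure ιE f) =>
    hf.tensorExtension_spec (S := S) hE hG hRpos hdom
  have hext := fun {f : α → X} {φ : β → X} (h : IsTensorImage ιE ιG S f φ) =>
    h.tensorExtension_ae_eq hE hG hRpos hdom
  refine ⟨tensorExtension ιE ιG S, ⟨?_, ?_, ?_, ?_, ?_, ?_⟩, ?_⟩
  · exact fun f g hf _ hfg => (hext ((hT f hf).2.congr_left hfg) (hT f hf).1).symm
  · exact fun f hf => (hT f hf).2.inTensorClosure hG (hT f hf).1
  · intro n u x f hf
    have h := hext ((isTensorImage_tensorSum (ιG := ιG) (S := S) u x).congr_left hf.symm)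
      (aestronglyMeasurable_tensorSum _ u x)
    exact h.trans (.of_eq rfl)
  · exact fun f g hf hg => hext ((hT f hf).2.add (hT g hg).2) ((hT f hf).1.add (hT g hg).1)
  · exact fun c f hf => hext ((hT f hf).2.const_smul c) ((hT f hf).1.const_smul c)
  · exact fun f e g hf hfe hg => (hT f hf).2.norm_le hE hG hRpos hdom hfe hg
  · exact fun C' SX' hSX' f hf => (hext (hSX'.isTensorImage hG hf) (hSX'.2.1 f hf).1).symm

end Ext
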